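/- arXiv:1305.3888 — 2 statements merged into one kernel-verified Lean document; each statement's English description precedes it below -/
import Mathlib

section
/- Let T > 0 and let E ⊆ (0, T) be a Lebesgue measurable set, and let t₀ ∈ (0, T) be a right density point of E, i.e. |E ∩ (t₀, t₀ + h)| / h → 1 as h → 0⁺. Then for each z > 1 there exists t₁ ∈ (t₀, T) such that the sequence defined by t_{m+1} = t₀ + z^{-m}(t₁ − t₀) for m ≥ 1 (so its first term is t₁ and t_m decreases to t₀) satisfies t_m − t_{m+1} ≤ 3 |E ∩ (t_{m+1}, t_m)| for every m ≥ 1. -/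
open MeasureTheory Set Filter

/-- Lemma on density points (Lemma `ob-lemma`): if `t₀ ∈ (0,T)` is a right density
point of the measurable set `E ⊆ (0,T)`, then for every `z > 1` there is
`t₁ ∈ (t₀, T)` such that the sequence `t_m = t₀ + z^{-(m-1)} (t₁ - t₀)` (so `t_1 = t₁`
and `t_{m+1} = t₀ + z^{-m}(t₁ - t₀)`) satisfies
`t_m - t_{m+1} ≤ 3 |E ∩ (t_{m+1}, t_m)|` for every `m ≥ 1`. -/
theorem stmt_0 (T : ℝ) (hT : 0 < T) (E : Set ℝ) (hEmeas : MeasurableSet E)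
    (hEsub : E ⊆ Ioo 0 T) (t₀ : ℝ) (ht₀ : t₀ ∈ Ioo 0 T)
    (hdens : Tendsto (fun h : ℝ => (volume (E ∩ Ioo t₀ (t₀ + h))).toReal / h)
      (nhdsWithin 0 (Ioi 0)) (nhds 1)) :
    ∀ z : ℝ, 1 < z → ∃ t₁ ∈ Ioo t₀ T,
      ∀ m : ℕ, 1 ≤ m →
        (t₀ + (t₁ - t₀) / z ^ (m - 1)) - (t₀ + (t₁ - t₀) / z ^ m)
          ≤ 3 * (volume (E ∩ Ioo (t₀ + (t₁ - t₀) / z ^ m)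
              (t₀ + (t₁ - t₀) / z ^ (m - 1)))).toReal := by
  intro z hz
  have hz0 : (0:ℝ) < z := lt_trans one_pos hz
  set ε : ℝ := (1 - 1/z)/3 with hε
  have hεpos : 0 < ε := by
    have : 1/z < 1 := by
      rw [div_lt_one hz0]; exact hz
    simp only [hε]; linarith
  have hlt : (1 - ε) < 1 := by linarith
  -- eventually the ratio exceeds 1 - ε
  have hev : ∀ᶠ h in nhdsWithin (0:ℝ) (Ioi 0),
      (1 - ε) < (volume (E ∩ Ioo t₀ (t₀ + h))).toReal / h :=
    hdens.eventually (eventually_gt_nhds hlt)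
  obtain ⟨δ, hδpos, hδ⟩ := Metric.mem_nhdsWithin_iff.mp hev
  -- choose t₁
  set d : ℝ := (min δ (T - t₀)) / 2 with hd
  have hTt₀ : 0 < T - t₀ := by linarith [ht₀.2]
  have hdpos : 0 < d := by
    apply div_pos _ two_pos
    exact lt_min hδpos hTt₀
  have hdδ : d < δ := by
    have : min δ (T - t₀) ≤ δ := min_le_left _ _
    simp only [hd]; linarith
  have hdT : t₀ + d < T := by
    have h1 : min δ (T - t₀) ≤ T - t₀ := min_le_right _ _
    have : d ≤ (T - t₀)/2 := by
      simp only [hd]; linarith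
    linarith
  refine ⟨t₀ + d, ⟨by linarith, hdT⟩, ?_⟩
  intro m hm
  obtain ⟨k, rfl⟩ : ∃ k, m = k + 1 := ⟨m - 1, (Nat.succ_pred_eq_of_pos hm).symm⟩
  simp only [add_sub_cancel_left, Nat.add_sub_cancel]
  have hPk : (0:ℝ) < z ^ k := pow_pos hz0 k
  have hPk1 : (0:ℝ) < z ^ (k+1) := pow_pos hz0 (k+1)
  have hzk1 : (1:ℝ) ≤ z ^ k := one_le_pow₀ (le_of_lt hz)
  set a : ℝ := t₀ + d / z ^ (k+1) with ha
  set b : ℝ := t₀ + d / z ^ k with hb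
  have hab : a < b := by
    simp only [ha, hb]
    have : d / z ^ (k+1) < d / z ^ k := by
      apply div_lt_div_of_pos_left hdpos hPk
      rw [pow_succ]
      nlinarith
    linarith
  -- the density bound at h = b - t₀ = d / z^k
  have hh : d / z ^ k ≤ d := by
    rw [div_le_iff₀ hPk]; nlinarith
  have hhpos : 0 < d / z ^ k := div_pos hdpos hPk
  have hhδ : dist (d / z ^ k) (0:ℝ) < δ := by
    rw [Real.dist_eq, sub_zero, abs_of_pos hhpos]; linarith
  have hratio : (1 - ε) < (volume (E ∩ Ioo t₀ (t₀ + d / z ^ k))).toReal / (d / z ^ k) :=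
    hδ ⟨Metric.mem_ball.mpr hhδ, hhpos⟩
  have hmeasb : (1 - ε) * (d / z ^ k) ≤ (volume (E ∩ Ioo t₀ b)).toReal := by
    have h2 := ((lt_div_iff₀ hhpos).mp hratio).le
    rw [hb]; exact h2
  -- split: E ∩ Ioo t₀ b ⊆ (E ∩ Ioo a b) ∪ Ioc t₀ a
  have hsub : E ∩ Ioo t₀ b ⊆ (E ∩ Ioo a b) ∪ Ioc t₀ a := by
    intro x ⟨hxE, hx1, hx2⟩
    by_cases hxa : x ≤ a
    · exact Or.inr ⟨hx1, hxa⟩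
    · exact Or.inl ⟨hxE, lt_of_not_ge hxa, hx2⟩
  have hfin1 : volume (E ∩ Ioo a b) ≠ ⊤ := by
    exact ne_top_of_le_ne_top (by simp [Real.volume_Ioo]) (measure_mono inter_subset_right)
  have hfin2 : volume (Ioc t₀ a) ≠ ⊤ := by simp [Real.volume_Ioc]
  have hmle : volume (E ∩ Ioo t₀ b) ≤ volume (E ∩ Ioo a b) + volume (Ioc t₀ a) :=
    le_trans (measure_mono hsub) (measure_union_le _ _)
  have htR : (volume (E ∩ Ioo t₀ b)).toReal
      ≤ (volume (E ∩ Ioo a b)).toReal + (volume (Ioc t₀ a)).toReal := by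
    rw [← ENNReal.toReal_add hfin1 hfin2]
    exact ENNReal.toReal_mono (by simp [ENNReal.add_ne_top, hfin1, hfin2]) hmle
  have hIoc : (volume (Ioc t₀ a)).toReal = d / z ^ (k+1) := by
    have h0 : 0 < d / z ^ (k+1) := div_pos hdpos hPk1
    rw [Real.volume_Ioc, ENNReal.toReal_ofReal (by simp only [ha]; linarith)]
    simp [ha]
  rw [hIoc] at htR
  -- conclude with arithmetic
  have key : (1 - ε) * (d / z ^ k) - d / z ^ (k+1)
      ≤ (volume (E ∩ Ioo a b)).toReal := by linarith
  have hgoal : (t₀ + d / z ^ k) - (t₀ + d / z ^ (k+1))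
      ≤ 3 * ((1 - ε) * (d / z ^ k) - d / z ^ (k+1)) := by
    have hzk : z ^ (k+1) = z ^ k * z := pow_succ z k
    have hX : d / z ^ (k+1) = (d / z ^ k) / z := by rw [hzk, ← div_div]
    have hXz : (d / z ^ k) / z ≤ d / z ^ k := div_le_self hhpos.le hz.le
    rw [hε, hX]
    have h1z : (1/z) * z = 1 := by field_simp
    ring_nf at hXz ⊢
    linarith
  calc (t₀ + d / z ^ k) - (t₀ + d / z ^ (k+1))
      ≤ 3 * ((1 - ε) * (d / z ^ k) - d / z ^ (k+1)) := hgoal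
    _ ≤ 3 * (volume (E ∩ Ioo a b)).toReal := by linarith
end

section
/- Let φ : ℝⁿ → ℝ be continuously differentiable with compact support and suppose ∫_{ℝⁿ} φ(x)² ϑ_λ(x) dx > 0. Set N = 2 (∫_{ℝⁿ} ‖∇φ(x)‖² ϑ_λ(x) dx) / (∫_{ℝⁿ} φ(x)² ϑ_λ(x) dx). Then for every r > 0, denoting by B_r the open ball of radius r centered at x₀, one has ( 1 − (8λ/r²)(λN + n/2) ) ∫_{ℝⁿ} ‖x − x₀‖² φ(x)² ϑ_λ(x) dx ≤ 8λ (λN + n/2) ∫_{B_r} φ(x)² ϑ_λ(x) dx. -/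
/-!
Write `ϑ = ϑ_λ`, `D = ∫ φ² ϑ`, `I = ∫ ‖x - x₀‖² φ² ϑ` and `G = ∫ ‖∇φ‖² ϑ`. Since
`∇ϑ = -(x - x₀) ϑ / (2λ)`, the divergence theorem for the compactly supported field
`φ² ϑ (x - x₀)` gives `I / (2λ) = n D + ∫ 2 φ ⟪∇φ, x - x₀⟫ ϑ`. Bounding the last integrand by
`‖x - x₀‖² φ² ϑ / (4λ) + 4λ ‖∇φ‖² ϑ` yields `I ≤ 4λ (n D + 4λ G) = 8λ (λN + n/2) D`. Finally the
part of `D` outside `B_r` is at most `I / r²`, because `‖x - x₀‖² ≥ r²` there.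
-/

open Real MeasureTheory RealInnerProductSpace

theorem ContinuousLinearMap.two_mul_mul_apply_le {E : Type*} [SeminormedAddCommGroup E]
    [NormedSpace ℝ E] (L : E →L[ℝ] ℝ) (s : ℝ) (v : E) {a : ℝ} (ha : 0 < a) :
    2 * s * L v ≤ a⁻¹ * (‖v‖ ^ 2 * s ^ 2) + a * ‖L‖ ^ 2 := by
  have hL : s * L v ≤ |s| * ‖v‖ * ‖L‖ := calc
    s * L v ≤ |s| * |L v| := by rw [← abs_mul]; exact le_abs_self _
    _ ≤ |s| * (‖L‖ * ‖v‖) := by gcongr; exact L.le_opNorm v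
    _ = |s| * ‖v‖ * ‖L‖ := by ring
  have hsq : 0 ≤ a⁻¹ * (|s| * ‖v‖ - a * ‖L‖) ^ 2 := by positivity
  have hexpand : a⁻¹ * (|s| * ‖v‖ - a * ‖L‖) ^ 2
      = a⁻¹ * (‖v‖ ^ 2 * s ^ 2) + a * ‖L‖ ^ 2 - 2 * (|s| * ‖v‖ * ‖L‖) := by
    field_simp
    rw [← sq_abs s]
    ring
  linarith

theorem norm_gradient_eq_norm_fderiv {F : Type*} [NormedAddCommGroup F] [InnerProductSpace ℝ F]
    [CompleteSpace F] (f : F → ℝ) (x : F) : ‖gradient f x‖ = ‖fderiv ℝ f x‖ := by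
  rw [← toDual_gradient, LinearIsometryEquiv.norm_map]

theorem setIntegral_compl_ball_le {E : Type*} [SeminormedAddCommGroup E] [MeasurableSpace E]
    [OpensMeasurableSpace E] {μ : Measure E} {f : E → ℝ} (x₀ : E) {r : ℝ} (hr : 0 < r)
    (hf_nonneg : 0 ≤ f) (hf : Integrable f μ)
    (hf_moment : Integrable (fun x ↦ ‖x - x₀‖ ^ 2 * f x) μ) :
    ∫ x in (Metric.ball x₀ r)ᶜ, f x ∂μ ≤ (r ^ 2)⁻¹ * ∫ x, ‖x - x₀‖ ^ 2 * f x ∂μ := by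
  have hs : MeasurableSet (Metric.ball x₀ r)ᶜ := Metric.isOpen_ball.measurableSet.compl
  calc ∫ x in (Metric.ball x₀ r)ᶜ, f x ∂μ
      ≤ ∫ x in (Metric.ball x₀ r)ᶜ, (r ^ 2)⁻¹ * (‖x - x₀‖ ^ 2 * f x) ∂μ := by
        refine setIntegral_mono_on hf.integrableOn (hf_moment.const_mul _).integrableOn hs
          fun x hx ↦ ?_
        have hrx : r ≤ ‖x - x₀‖ := by simpa [dist_eq_norm] using hx
        rw [← mul_assoc]
        exact le_mul_of_one_le_left (hf_nonneg x)
          ((one_le_inv_mul₀ (by positivity)).2 (pow_le_pow_left₀ hr.le hrx 2))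
    _ = (r ^ 2)⁻¹ * ∫ x in (Metric.ball x₀ r)ᶜ, ‖x - x₀‖ ^ 2 * f x ∂μ := integral_const_mul _ _
    _ ≤ (r ^ 2)⁻¹ * ∫ x, ‖x - x₀‖ ^ 2 * f x ∂μ :=
        mul_le_mul_of_nonneg_left (setIntegral_le_integral hf_moment
          (.of_forall fun x ↦ mul_nonneg (sq_nonneg _) (hf_nonneg x))) (by positivity)

theorem HasCompactSupport.sq {α β : Type*} [TopologicalSpace α] [MonoidWithZero β] {f : α → β}
    (hf : HasCompactSupport f) : HasCompactSupport fun x ↦ f x ^ 2 :=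
  hf.comp_left (g := fun t : β ↦ t ^ 2) (zero_pow two_ne_zero)

section Integrability

variable {E : Type*} [NormedAddCommGroup E] [MeasurableSpace E] [OpensMeasurableSpace E]
  {μ : Measure E} [IsFiniteMeasureOnCompacts μ] {φ w : E → ℝ} (x₀ : E)

theorem integrable_sq_mul (hφ : Continuous φ) (hsupp : HasCompactSupport φ) (hw : Continuous w) :
    Integrable (fun x ↦ φ x ^ 2 * w x) μ :=
  ((hφ.pow 2).mul hw).integrable_of_hasCompactSupport hsupp.sq.mul_right

theorem integrable_norm_sub_sq_mul_sq_mul (hφ : Continuous φ) (hsupp : HasCompactSupport φ)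
    (hw : Continuous w) : Integrable (fun x ↦ ‖x - x₀‖ ^ 2 * φ x ^ 2 * w x) μ :=
  ((((continuous_id.sub continuous_const).norm.pow 2).mul (hφ.pow 2)).mul hw
    ).integrable_of_hasCompactSupport hsupp.sq.mul_left.mul_right

variable [NormedSpace ℝ E]

theorem ContDiff.integrable_fderiv_apply (hφ : ContDiff ℝ 1 φ) (hsupp : HasCompactSupport φ)
    (v : E) : Integrable (fun x ↦ fderiv ℝ φ x v) μ :=
  ((hφ.continuous_fderiv one_ne_zero).clm_apply continuous_const).integrable_of_hasCompactSupport
    (hsupp.fderiv_apply ℝ v)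

theorem integrable_mul_fderiv_apply_sub_mul (hφ : ContDiff ℝ 1 φ) (hsupp : HasCompactSupport φ)
    (hw : Continuous w) : Integrable (fun x ↦ 2 * φ x * fderiv ℝ φ x (x - x₀) * w x) μ :=
  (((continuous_const.mul hφ.continuous).mul ((hφ.continuous_fderiv one_ne_zero).clm_apply
    (continuous_id.sub continuous_const))).mul hw).integrable_of_hasCompactSupport
    hsupp.mul_left.mul_right.mul_right

theorem integrable_norm_fderiv_sq_mul (hφ : ContDiff ℝ 1 φ) (hsupp : HasCompactSupport φ)
    (hw : Continuous w) : Integrable (fun x ↦ ‖fderiv ℝ φ x‖ ^ 2 * w x) μ :=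
  (((hφ.continuous_fderiv one_ne_zero).norm.pow 2).mul hw).integrable_of_hasCompactSupport
    (hsupp.fderiv ℝ).norm.sq.mul_right

end Integrability

section IntegrationByParts

variable {E : Type*} [NormedAddCommGroup E] [NormedSpace ℝ E] [FiniteDimensional ℝ E]
  [MeasurableSpace E] [BorelSpace E] {μ : Measure E} [μ.IsAddHaarMeasure]

theorem integral_fderiv_apply_eq_zero {g : E → ℝ} (hg : ContDiff ℝ 1 g)
    (hsupp : HasCompactSupport g) (v : E) : ∫ x, fderiv ℝ g x v ∂μ = 0 := by
  have h := integral_mul_fderiv_eq_neg_fderiv_mul_of_integrable (μ := μ)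
    (f := fun _ ↦ (1 : ℝ)) (g := g) (v := v) (by simp)
    (by simpa using hg.integrable_fderiv_apply hsupp v)
    (by simpa using hg.continuous.integrable_of_hasCompactSupport hsupp)
    (fun x _ ↦ differentiableAt_const _) (fun x _ ↦ hg.differentiable one_ne_zero x)
  simpa using h

/-- The divergence theorem for the vector field `c(x) (x - x₀)`, proved coordinatewise by
integration by parts. -/
theorem integral_finrank_mul_add_fderiv_sub_eq_zero {c : E → ℝ} (hc : ContDiff ℝ 1 c)
    (hsupp : HasCompactSupport c) (x₀ : E) :
    ∫ x, ((Module.finrank ℝ E : ℝ) * c x + fderiv ℝ c x (x - x₀)) ∂μ = 0 := by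
  let b := Module.finBasis ℝ E
  let coord (i : Fin (Module.finrank ℝ E)) : E →L[ℝ] ℝ :=
    LinearMap.toContinuousLinearMap (b.coord i)
  have hcoord (i : Fin (Module.finrank ℝ E)) (x : E) :
      HasFDerivAt (fun y ↦ coord i (y - x₀)) (coord i) x :=
    (coord i).hasFDerivAt.comp x ((hasFDerivAt_id x).sub_const x₀)
  have hsum (x : E) : (Module.finrank ℝ E : ℝ) * c x + fderiv ℝ c x (x - x₀)
      = ∑ i, fderiv ℝ (fun y ↦ c y * coord i (y - x₀)) x (b i) := by
    have hderiv (i : Fin (Module.finrank ℝ E)) :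
        fderiv ℝ (fun y ↦ c y * coord i (y - x₀)) x (b i)
          = c x + coord i (x - x₀) * fderiv ℝ c x (b i) := by
      rw [(((hc.differentiable one_ne_zero) x).hasFDerivAt.fun_mul (hcoord i x)).fderiv]
      simp [coord, mul_comm]
    simp only [hderiv, Finset.sum_add_distrib, Finset.sum_const, Finset.card_univ,
      Fintype.card_fin, nsmul_eq_mul]
    congr 1
    conv_lhs => rw [← b.sum_repr (x - x₀), map_sum]
    simp [coord, mul_comm]
  have hcontDiff (i : Fin (Module.finrank ℝ E)) :
      ContDiff ℝ 1 (fun y ↦ c y * coord i (y - x₀)) :=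
    hc.mul ((coord i).contDiff.comp (contDiff_id.sub contDiff_const))
  simp_rw [hsum]
  rw [integral_finsetSum]
  · exact Finset.sum_eq_zero fun i _ ↦
      integral_fderiv_apply_eq_zero (hcontDiff i) hsupp.mul_right (b i)
  · exact fun i _ ↦ (hcontDiff i).integrable_fderiv_apply hsupp.mul_right (b i)

end IntegrationByParts

noncomputable def gaussianWeight {E : Type*} [SeminormedAddCommGroup E] (x₀ : E) (lam : ℝ)
    (x : E) : ℝ :=
  exp (-‖x - x₀‖ ^ 2 / (4 * lam))

theorem gaussianWeight_pos {E : Type*} [SeminormedAddCommGroup E] (x₀ : E) (lam : ℝ) (x : E) :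
    0 < gaussianWeight x₀ lam x :=
  exp_pos _

section GaussianWeight

variable {E : Type*} [NormedAddCommGroup E] [InnerProductSpace ℝ E] (x₀ : E) (lam : ℝ)

theorem contDiff_gaussianWeight {k : WithTop ℕ∞} : ContDiff ℝ k (gaussianWeight x₀ lam) :=
  ((contDiff_norm_sq ℝ).comp (contDiff_id.sub contDiff_const)).neg.div_const _ |>.exp

theorem continuous_gaussianWeight : Continuous (gaussianWeight x₀ lam) :=
  (contDiff_gaussianWeight (k := 0) x₀ lam).continuous

theorem fderiv_gaussianWeight_apply (x v : E) :
    fderiv ℝ (gaussianWeight x₀ lam) x v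
      = -(2 * lam)⁻¹ * ⟪x - x₀, v⟫ * gaussianWeight x₀ lam x := by
  have hw : gaussianWeight x₀ lam = fun y ↦ exp (‖y - x₀‖ ^ 2 * -(4 * lam)⁻¹) := by
    ext y
    rw [gaussianWeight, neg_div, div_eq_mul_inv, neg_mul_eq_mul_neg]
  have h := ((hasFDerivAt_sub_const (x := x) x₀).norm_sq.mul_const (-(4 * lam)⁻¹)).exp
  rw [hw, h.fderiv]
  simp [inner_sub_left]
  ring

variable [FiniteDimensional ℝ E] [MeasurableSpace E] [BorelSpace E] {μ : Measure E}
  [μ.IsAddHaarMeasure] {φ : E → ℝ}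

theorem integral_norm_sub_sq_mul_sq_mul_gaussianWeight_eq (hφ : ContDiff ℝ 1 φ)
    (hsupp : HasCompactSupport φ) :
    (2 * lam)⁻¹ * ∫ x, ‖x - x₀‖ ^ 2 * φ x ^ 2 * gaussianWeight x₀ lam x ∂μ
      = Module.finrank ℝ E * ∫ x, φ x ^ 2 * gaussianWeight x₀ lam x ∂μ
        + ∫ x, 2 * φ x * fderiv ℝ φ x (x - x₀) * gaussianWeight x₀ lam x ∂μ := by
  have hw := continuous_gaussianWeight x₀ lam
  have hderiv (x : E) : fderiv ℝ (fun y ↦ φ y ^ 2 * gaussianWeight x₀ lam y) x (x - x₀)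
      = 2 * φ x * fderiv ℝ φ x (x - x₀) * gaussianWeight x₀ lam x
        - (2 * lam)⁻¹ * (‖x - x₀‖ ^ 2 * φ x ^ 2 * gaussianWeight x₀ lam x) := by
    rw [fderiv_fun_mul (c := fun y ↦ φ y ^ 2) ((hφ.differentiable one_ne_zero x).pow 2)
      ((contDiff_gaussianWeight (k := 1) x₀ lam).differentiable one_ne_zero x)]
    simp [fderiv_gaussianWeight_apply, fderiv_fun_pow 2 (hφ.differentiable one_ne_zero x)]
    ring
  have hdiv := integral_finrank_mul_add_fderiv_sub_eq_zero (μ := μ)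
    ((hφ.pow 2).mul (contDiff_gaussianWeight x₀ lam)) hsupp.sq.mul_right x₀
  have hint_sq := integrable_sq_mul (μ := μ) hφ.continuous hsupp hw
  have hint_moment := integrable_norm_sub_sq_mul_sq_mul (μ := μ) x₀ hφ.continuous hsupp hw
  have hint_cross := integrable_mul_fderiv_apply_sub_mul (μ := μ) x₀ hφ hsupp hw
  simp_rw [hderiv] at hdiv
  rw [integral_add (hint_sq.const_mul _) (hint_cross.sub' (hint_moment.const_mul _)),
    integral_sub hint_cross (hint_moment.const_mul _), integral_const_mul,
    integral_const_mul] at hdiv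
  linarith

theorem integral_norm_sub_sq_mul_sq_mul_gaussianWeight_le (hlam : 0 < lam)
    (hφ : ContDiff ℝ 1 φ) (hsupp : HasCompactSupport φ) :
    ∫ x, ‖x - x₀‖ ^ 2 * φ x ^ 2 * gaussianWeight x₀ lam x ∂μ
      ≤ 4 * lam * (Module.finrank ℝ E * ∫ x, φ x ^ 2 * gaussianWeight x₀ lam x ∂μ
        + 4 * lam * ∫ x, ‖fderiv ℝ φ x‖ ^ 2 * gaussianWeight x₀ lam x ∂μ) := by
  have hw := continuous_gaussianWeight x₀ lam
  have hint_moment := integrable_norm_sub_sq_mul_sq_mul (μ := μ) x₀ hφ.continuous hsupp hw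
  have hint_cross := integrable_mul_fderiv_apply_sub_mul (μ := μ) x₀ hφ hsupp hw
  have hint_grad := integrable_norm_fderiv_sq_mul (μ := μ) hφ hsupp hw
  have hcross : ∫ x, 2 * φ x * fderiv ℝ φ x (x - x₀) * gaussianWeight x₀ lam x ∂μ
      ≤ (4 * lam)⁻¹ * (∫ x, ‖x - x₀‖ ^ 2 * φ x ^ 2 * gaussianWeight x₀ lam x ∂μ)
        + 4 * lam * ∫ x, ‖fderiv ℝ φ x‖ ^ 2 * gaussianWeight x₀ lam x ∂μ := by
    rw [← integral_const_mul, ← integral_const_mul,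
      ← integral_add (hint_moment.const_mul _) (hint_grad.const_mul _)]
    refine integral_mono hint_cross ((hint_moment.const_mul _).add (hint_grad.const_mul _))
      fun x ↦ ?_
    have h := mul_le_mul_of_nonneg_right
      ((fderiv ℝ φ x).two_mul_mul_apply_le (φ x) (x - x₀) (by positivity : 0 < 4 * lam))
      (gaussianWeight_pos x₀ lam x).le
    dsimp only
    linarith
  have hidentity := integral_norm_sub_sq_mul_sq_mul_gaussianWeight_eq (μ := μ) x₀ lam hφ hsupp
  have hhalf : (2 * lam)⁻¹ = 2 * (4 * lam)⁻¹ := by field_simp; norm_num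
  rw [hhalf, mul_assoc] at hidentity
  rw [← inv_mul_le_iff₀ (by positivity)]
  linarith

end GaussianWeight

theorem stmt_10_general (n : ℕ) (x₀ : EuclideanSpace ℝ (Fin n)) (lam : ℝ)
    (hlam : 0 < lam) (φ : EuclideanSpace ℝ (Fin n) → ℝ)
    (hφ : ContDiff ℝ 1 φ) (hsupp : HasCompactSupport φ)
    (hpos : 0 < ∫ x : EuclideanSpace ℝ (Fin n),
        φ x ^ 2 * Real.exp (-‖x - x₀‖ ^ 2 / (4 * lam)))
    (N : ℝ)
    (hN : N = 2 * (∫ x : EuclideanSpace ℝ (Fin n),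
        ‖gradient φ x‖ ^ 2 * Real.exp (-‖x - x₀‖ ^ 2 / (4 * lam)))
      / ∫ x : EuclideanSpace ℝ (Fin n),
            φ x ^ 2 * Real.exp (-‖x - x₀‖ ^ 2 / (4 * lam))) :
    ∀ r : ℝ, 0 < r →
      (1 - 8 * lam / r ^ 2 * (lam * N + (n : ℝ) / 2))
          * ∫ x : EuclideanSpace ℝ (Fin n),
              ‖x - x₀‖ ^ 2 * φ x ^ 2 * Real.exp (-‖x - x₀‖ ^ 2 / (4 * lam))
        ≤ 8 * lam * (lam * N + (n : ℝ) / 2)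
            * ∫ x in Metric.ball x₀ r,
                φ x ^ 2 * Real.exp (-‖x - x₀‖ ^ 2 / (4 * lam)) := by
  intro r hr
  have hw := continuous_gaussianWeight x₀ lam
  have hint_sq := integrable_sq_mul (μ := volume) hφ.continuous hsupp hw
  have hmoment_le := integral_norm_sub_sq_mul_sq_mul_gaussianWeight_le (μ := volume) x₀ lam
    hlam hφ hsupp
  have htail := setIntegral_compl_ball_le x₀ hr
    (fun x ↦ mul_nonneg (sq_nonneg (φ x)) (gaussianWeight_pos x₀ lam x).le) hint_sq
    (by simpa only [mul_assoc] using integrable_norm_sub_sq_mul_sq_mul x₀ hφ.continuous hsupp hw)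
  have hsplit := integral_add_compl (Metric.isOpen_ball (x := x₀) (ε := r)).measurableSet hint_sq
  simp only [gaussianWeight, finrank_euclideanSpace_fin, ← mul_assoc] at hmoment_le htail hsplit
  simp only [← norm_gradient_eq_norm_fderiv] at hmoment_le
  set D := ∫ x, φ x ^ 2 * rexp (-‖x - x₀‖ ^ 2 / (4 * lam))
  set I := ∫ x, ‖x - x₀‖ ^ 2 * φ x ^ 2 * rexp (-‖x - x₀‖ ^ 2 / (4 * lam))
  set G := ∫ x, ‖gradient φ x‖ ^ 2 * rexp (-‖x - x₀‖ ^ 2 / (4 * lam))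
  subst hN
  set C := 8 * lam * (lam * (2 * G / D) + (n : ℝ) / 2)
  have hCD : C * D = 4 * lam * (n * D + 4 * lam * G) := by
    simp only [C]
    field_simp
    ring
  calc (1 - 8 * lam / r ^ 2 * (lam * (2 * G / D) + (n : ℝ) / 2)) * I
      = I - C * ((r ^ 2)⁻¹ * I) := by ring
    _ ≤ C * D - C * ∫ x in (Metric.ball x₀ r)ᶜ, φ x ^ 2 * rexp (-‖x - x₀‖ ^ 2 / (4 * lam)) :=
      sub_le_sub (hmoment_le.trans hCD.ge) (mul_le_mul_of_nonneg_left htail (by positivity))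
    _ = C * ∫ x in Metric.ball x₀ r, φ x ^ 2 * rexp (-‖x - x₀‖ ^ 2 / (4 * lam)) := by
      rw [← hsplit]
      ring

/-- The frequency-function inequality: for a compactly supported `C¹` function `φ`
with positive weighted `L²` norm, setting
`N = 2 (∫ ‖∇φ‖² ϑ_λ) / (∫ φ² ϑ_λ)`, for every `r > 0` one has
`(1 - (8λ/r²)(λN + n/2)) ∫ ‖x - x₀‖² φ² ϑ_λ ≤ 8λ (λN + n/2) ∫_{B_r} φ² ϑ_λ`. -/
theorem stmt_10 (n : ℕ) (hn : 1 ≤ n) (x₀ : EuclideanSpace ℝ (Fin n)) (lam : ℝ)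
    (hlam : 0 < lam) (φ : EuclideanSpace ℝ (Fin n) → ℝ)
    (hφ : ContDiff ℝ 1 φ) (hsupp : HasCompactSupport φ)
    (hpos : 0 < ∫ x : EuclideanSpace ℝ (Fin n),
        φ x ^ 2 * Real.exp (-‖x - x₀‖ ^ 2 / (4 * lam)))
    (N : ℝ)
    (hN : N = 2 * (∫ x : EuclideanSpace ℝ (Fin n),
        ‖gradient φ x‖ ^ 2 * Real.exp (-‖x - x₀‖ ^ 2 / (4 * lam)))
      / ∫ x : EuclideanSpace ℝ (Fin n),
            φ x ^ 2 * Real.exp (-‖x - x₀‖ ^ 2 / (4 * lam))) :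
    ∀ r : ℝ, 0 < r →
      (1 - 8 * lam / r ^ 2 * (lam * N + (n : ℝ) / 2))
          * ∫ x : EuclideanSpace ℝ (Fin n),
              ‖x - x₀‖ ^ 2 * φ x ^ 2 * Real.exp (-‖x - x₀‖ ^ 2 / (4 * lam))
        ≤ 8 * lam * (lam * N + (n : ℝ) / 2)
            * ∫ x in Metric.ball x₀ r,
                φ x ^ 2 * Real.exp (-‖x - x₀‖ ^ 2 / (4 * lam)) :=
  stmt_10_general n x₀ lam hlam φ hφ hsupp hpos N hN
end
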